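/- As formal power series over the integers, (q^(δ) · Σ_{n≥0} p(n) q^n · Π_{n≥1}(1 - q^(Mn))^M) | U(M) = Σ_{n≥0} p(Mn + β) q^(n + (δ+β)/M) · Π_{n≥1}(1 - q^n)^M, whenever M is a positive integer, β is the least positive residue of the inverse of 24 mod M (assuming gcd(24,M)=1), δ ≡ -β (mod M), and (δ+β)/M is an integer. -/

import Mathlib

open PowerSeries

/-- The partition function `p(n)`. -/
noncomputable def partitionFn (n : ℕ) : ℕ := Fintype.card (Nat.Partition n)

/-- The generating function `Σ p(n) qⁿ` over `ℤ`. -/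
noncomputable def P : PowerSeries ℤ := PowerSeries.mk fun n => (partitionFn n : ℤ)

/-- The `U(M)` operator on formal power series: `(Σ a(n) qⁿ) | U(M) = Σ a(Mn) qⁿ`. -/
noncomputable def Uop (M : ℕ) (f : PowerSeries ℤ) : PowerSeries ℤ :=
  PowerSeries.mk fun n => PowerSeries.coeff (M * n) f

/-- The `V(j)` operator on formal power series: `(Σ a(n) qⁿ) | V(j) = Σ a(n) q^(jn)`. -/
noncomputable def Vop (j : ℕ) (f : PowerSeries ℤ) : PowerSeries ℤ :=
  PowerSeries.mk fun n => if j ∣ n then PowerSeries.coeff (n / j) f else 0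

/-! Since `(f · g|V(M)) | U(M) = (f|U(M)) · g`, the factor `Π(1 - q^{Mn})^M = E^M | V(M)` passes
through `U(M)` as `E^M`.  What remains is `(q^δ · Σ p(n)qⁿ) | U(M)`, whose `n`-th coefficient is
`p(Mn - δ) = p(M(n - t) + β)`, and this index is nonnegative exactly when `n ≥ t` because
`0 ≤ β < M`. -/

open Finset

section UopVop

variable {M : ℕ}

-- Only the pairs `(a, b)` with `M ∣ b` contribute to `coeff (M * n)`, and then also `M ∣ a`.
theorem coeff_mul_mul_Vop (hM : 0 < M) (f g : PowerSeries ℤ) (n : ℕ) :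
    coeff (M * n) (f * Vop M g) =
      ∑ p ∈ antidiagonal n, coeff (M * p.1) f * coeff p.2 g := by
  rw [coeff_mul]
  symm
  refine Finset.sum_of_injOn (fun p => (M * p.1, M * p.2)) ?_ ?_ ?_ ?_
  · rintro ⟨i, j⟩ - ⟨i', j'⟩ - h
    simp only [Prod.mk.injEq, Nat.mul_left_cancel_iff hM] at h
    rw [h.1, h.2]
  · rintro ⟨i, j⟩ h
    simp only [Finset.mem_coe, HasAntidiagonal.mem_antidiagonal] at h ⊢
    rw [← h, mul_add]
  · rintro ⟨a, b⟩ hab hnot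
    simp only [HasAntidiagonal.mem_antidiagonal] at hab
    simp only [Vop, coeff_mk]
    rw [if_neg, mul_zero]
    rintro ⟨j, rfl⟩
    obtain ⟨i, rfl⟩ : M ∣ a :=
      (Nat.dvd_add_left (dvd_mul_right M j)).mp (hab ▸ dvd_mul_right M n)
    refine hnot ⟨(i, j), ?_, rfl⟩
    simp only [Finset.mem_coe, HasAntidiagonal.mem_antidiagonal]
    rw [← mul_add] at hab
    exact Nat.eq_of_mul_eq_mul_left hM hab
  · rintro ⟨i, j⟩ -
    simp [Vop, Nat.mul_div_cancel_left _ hM]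

theorem Uop_mul_Vop (hM : 0 < M) (f g : PowerSeries ℤ) :
    Uop M (f * Vop M g) = Uop M f * g := by
  ext n
  rw [coeff_mul]
  simp only [Uop, coeff_mk, coeff_mul_mul_Vop hM]

theorem Uop_mul_Vop_pow (hM : 0 < M) (f g : PowerSeries ℤ) (k : ℕ) :
    Uop M (f * Vop M g ^ k) = Uop M f * g ^ k := by
  induction k with
  | zero => simp
  | succ k ih => rw [pow_succ, ← mul_assoc, Uop_mul_Vop hM, ih, pow_succ, mul_assoc]

-- `M * n ≥ δ` exactly when `n ≥ t`, because `δ = M * t - β` with `0 ≤ β < M`.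
theorem Uop_X_pow_mul {β δ t : ℕ} (hβ : β < M) (ht : δ + β = M * t) (f : PowerSeries ℤ) :
    Uop M (X ^ δ * f) = X ^ t * PowerSeries.mk fun n => coeff (M * n + β) f := by
  ext n
  simp only [Uop, coeff_mk, coeff_X_pow_mul']
  by_cases hn : t ≤ n
  · have hMt : M * t ≤ M * n := Nat.mul_le_mul_left M hn
    have hδ : M * n - δ = M * (n - t) + β := by rw [Nat.mul_sub]; omega
    rw [if_pos (show δ ≤ M * n by omega), if_pos hn, hδ]
  · have hMt : M * n + M ≤ M * t := by
      simpa only [mul_add, mul_one] using Nat.mul_le_mul_left M (show n + 1 ≤ t by omega)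
    rw [if_neg (show ¬δ ≤ M * n by omega), if_neg hn]

end UopVop

theorem U_shift_identity_general (M β δ t : ℕ) (hM : 0 < M) (hβ2 : β ≤ M - 1)
    (ht : δ + β = M * t) (E : PowerSeries ℤ) :
    Uop M ((PowerSeries.X : PowerSeries ℤ) ^ δ * P * (Vop M E) ^ M) =
      (PowerSeries.X : PowerSeries ℤ) ^ t *
        (PowerSeries.mk fun n => (partitionFn (M * n + β) : ℤ)) * E ^ M := by
  rw [Uop_mul_Vop_pow hM, Uop_X_pow_mul (by omega) ht]
  simp only [P, coeff_mk]

/-- With `E = Π_{n≥1}(1 - qⁿ)` (characterized by `E · Σ p(n)qⁿ = 1`), `M` coprime to `24`,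
`β` the inverse of `24` mod `M` with `1 ≤ β ≤ M - 1`, and `δ + β = M·t`:
`(q^δ · Σ p(n)qⁿ · Π(1-q^{Mn})^M) | U(M) = Σ p(Mn+β) q^{n+t} · Π(1-qⁿ)^M`. -/
theorem U_shift_identity (M β δ t : ℕ) (hM : 0 < M) (hcop : Nat.Coprime 24 M)
    (hβ1 : 1 ≤ β) (hβ2 : β ≤ M - 1) (hβ : 24 * β ≡ 1 [MOD M])
    (ht : δ + β = M * t) (E : PowerSeries ℤ) (hE : E * P = 1) :
    Uop M ((PowerSeries.X : PowerSeries ℤ) ^ δ * P * (Vop M E) ^ M) =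
      (PowerSeries.X : PowerSeries ℤ) ^ t *
        (PowerSeries.mk fun n => (partitionFn (M * n + β) : ℤ)) * E ^ M :=
  U_shift_identity_general M β δ t hM hβ2 ht E
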